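/- For every v ∈ ℝ^d, every λ ∈ ℝ, and every smooth function f : ℝ^d → ℂ, the Vignéras operator intertwines with the raising operator: V_{λ+1}(𝒟(v) f) = 𝒟(v)(V_λ f). In particular, if V_λ f = 0 then V_{λ+1}(𝒟(v) f) = 0, so 𝒟(v) maps solutions of Vignéras' equation with parameter λ to solutions with parameter λ + 1. -/

import Mathlib

/-- Partial derivative in direction `i` of a function on `ℝ^d`. -/
noncomputable def pd {d : ℕ} (i : Fin d) (f : (Fin d → ℝ) → ℂ) : (Fin d → ℝ) → ℂ :=
  fun x => fderiv ℝ f x (Pi.single i 1)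

/-- Vignéras operator `V_λ f = ∑ (B⁻¹)_{ij} ∂_i∂_j f + 2π(∑ x_i ∂_i f − λ f)`. -/
noncomputable def Vop {d : ℕ} (B : Matrix (Fin d) (Fin d) ℝ) (lam : ℝ)
    (f : (Fin d → ℝ) → ℂ) : (Fin d → ℝ) → ℂ :=
  fun x =>
    (∑ i, ∑ j, ((B⁻¹ i j : ℝ) : ℂ) * pd i (pd j f) x)
      + 2 * (Real.pi : ℂ) * ((∑ i, (x i : ℂ) * pd i f x) - (lam : ℂ) * f x)

/-- Raising operator `𝒟(v) f = (v,x) f + (1/2π) ∑ v_i ∂_i f`, where `(v,x) = vᵀBx`. -/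
noncomputable def Dop {d : ℕ} (B : Matrix (Fin d) (Fin d) ℝ) (v : Fin d → ℝ)
    (f : (Fin d → ℝ) → ℂ) : (Fin d → ℝ) → ℂ :=
  fun x => ((∑ i, ∑ j, v i * B i j * x j : ℝ) : ℂ) * f x
    + (1 / (2 * (Real.pi : ℂ))) * ∑ i, (v i : ℂ) * pd i f x

/-!
Write `V_λ = Δ + 2π(E - λ)` with `Δ = ∑ (B⁻¹)ᵢⱼ ∂ᵢ∂ⱼ` and `E = ∑ xᵢ ∂ᵢ`, and
`𝒟(v) = L + (2π)⁻¹ ∂_v` with `L x = (v, x)`. The partial derivatives of `L` are the constants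
`(vᵀB)ᵢ`, and `B⁻¹ Bᵀ = 1` by symmetry, so the Leibniz rule gives
`V_{λ+1}(L f) = L · V_λ f + 2 ∂_v f`. Partial derivatives commute and `∂ₖ E = E ∂ₖ + ∂ₖ`, so
`∂ₖ V_λ = V_{λ-1} ∂ₖ`, whence `V_{λ+1}(∂_v f) = ∂_v V_λ f - 4π ∂_v f`. The two defects cancel
in `V_{λ+1}(L f + (2π)⁻¹ ∂_v f)`.
-/

open scoped ContDiff Matrix

variable {d : ℕ} {f g : (Fin d → ℝ) → ℂ}

@[fun_prop]
theorem contDiff_ofReal {n : WithTop ℕ∞} : ContDiff ℝ n (fun x : ℝ => (x : ℂ)) :=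
  Complex.ofRealCLM.contDiff

@[fun_prop]
theorem ContDiff.pd (hf : ContDiff ℝ ∞ f) (i : Fin d) : ContDiff ℝ ∞ (fun x => pd i f x) :=
  (hf.fderiv_right (m := ∞) le_rfl).clm_apply contDiff_const

theorem pd_fun_add (hf : Differentiable ℝ f) (hg : Differentiable ℝ g) (i : Fin d) :
    pd i (fun y => f y + g y) = fun x => pd i f x + pd i g x := by
  ext x; simp [pd, fderiv_fun_add (hf x) (hg x)]

theorem pd_fun_sub (hf : Differentiable ℝ f) (hg : Differentiable ℝ g) (i : Fin d) :
    pd i (fun y => f y - g y) = fun x => pd i f x - pd i g x := by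
  ext x; simp [pd, fderiv_fun_sub (hf x) (hg x)]

theorem pd_const_mul (hf : Differentiable ℝ f) (c : ℂ) (i : Fin d) :
    pd i (fun y => c * f y) = fun x => c * pd i f x := by
  ext x; simp [pd, fderiv_const_mul (hf x)]

theorem pd_fun_mul (hf : Differentiable ℝ f) (hg : Differentiable ℝ g) (i : Fin d) :
    pd i (fun y => f y * g y) = fun x => pd i f x * g x + f x * pd i g x := by
  ext x; simp [pd, fderiv_fun_mul (hf x) (hg x)]; ring

theorem pd_fun_sum {ι : Type*} (s : Finset ι) {F : ι → (Fin d → ℝ) → ℂ}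
    (hF : ∀ k ∈ s, Differentiable ℝ (F k)) (i : Fin d) :
    pd i (fun y => ∑ k ∈ s, F k y) = fun x => ∑ k ∈ s, pd i (F k) x := by
  ext x; simp [pd, fderiv_fun_sum fun k hk => hF k hk x]

theorem pd_const (c : ℂ) (i : Fin d) : pd i (fun _ => c) = fun _ => 0 := by
  ext x; simp [pd]

theorem pd_ofReal_apply (i j : Fin d) :
    pd i (fun y => (y j : ℂ)) = fun _ => if j = i then 1 else 0 := by
  ext x
  have : (fun y : Fin d → ℝ => (y j : ℂ)) = Complex.ofRealCLM.comp (ContinuousLinearMap.proj j) :=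
    rfl
  rw [pd, this, ContinuousLinearMap.fderiv]
  simp [Pi.single_apply, apply_ite Complex.ofReal]

theorem pd_comm (hf : ContDiff ℝ 2 f) (i j : Fin d) : pd i (pd j f) = pd j (pd i f) := by
  ext x
  have hdiff : Differentiable ℝ (fderiv ℝ f) :=
    (hf.fderiv_right (m := 1) le_rfl).differentiable one_ne_zero
  have h (a b : Fin d) :
      pd a (pd b f) x = fderiv ℝ (fderiv ℝ f) x (Pi.single a 1) (Pi.single b 1) := by
    show fderiv ℝ (fun y => fderiv ℝ f y (Pi.single b 1)) x (Pi.single a 1) = _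
    rw [fderiv_clm_apply (u := fun _ => Pi.single b 1) (hdiff x)
      (differentiableAt_const _)]
    simp
  rw [h, h]
  exact hf.contDiffAt.isSymmSndFDerivAt (by simp) _ _

noncomputable def dirPd (v : Fin d → ℝ) (f : (Fin d → ℝ) → ℂ) : (Fin d → ℝ) → ℂ :=
  fun x => ∑ i, (v i : ℂ) * pd i f x

noncomputable def pairing (B : Matrix (Fin d) (Fin d) ℝ) (v : Fin d → ℝ) :
    (Fin d → ℝ) → ℂ :=
  fun x => ((∑ i, ∑ j, v i * B i j * x j : ℝ) : ℂ)

theorem Dop_eq (B : Matrix (Fin d) (Fin d) ℝ) (v : Fin d → ℝ) (f : (Fin d → ℝ) → ℂ) :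
    Dop B v f = fun x => pairing B v x * f x + 1 / (2 * (Real.pi : ℂ)) * dirPd v f x :=
  rfl

theorem pairing_eq_sum (B : Matrix (Fin d) (Fin d) ℝ) (v : Fin d → ℝ) :
    pairing B v = fun x => ∑ j, ((v ᵥ* B) j : ℂ) * (x j : ℂ) := by
  ext x
  simp only [pairing, Matrix.vecMul, dotProduct]
  push_cast
  simp only [Finset.sum_mul]
  rw [Finset.sum_comm]

@[fun_prop]
theorem contDiff_pairing (B : Matrix (Fin d) (Fin d) ℝ) (v : Fin d → ℝ) {n : WithTop ℕ∞} :
    ContDiff ℝ n (fun x => pairing B v x) := by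
  rw [pairing_eq_sum]; fun_prop

@[fun_prop]
theorem ContDiff.dirPd (hf : ContDiff ℝ ∞ f) (v : Fin d → ℝ) :
    ContDiff ℝ ∞ (fun x => dirPd v f x) := by
  unfold _root_.dirPd; fun_prop

theorem pd_pairing (B : Matrix (Fin d) (Fin d) ℝ) (v : Fin d → ℝ) (i : Fin d) :
    pd i (pairing B v) = fun _ => ((v ᵥ* B) i : ℂ) := by
  rw [pairing_eq_sum, pd_fun_sum _ (fun j _ => by fun_prop)]
  simp (disch := fun_prop (disch := simp)) only [pd_const_mul, pd_ofReal_apply]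
  simp

theorem pd_pairing_mul (B : Matrix (Fin d) (Fin d) ℝ) (v : Fin d → ℝ) (hf : Differentiable ℝ f)
    (i : Fin d) :
    pd i (fun y => pairing B v y * f y)
      = fun x => ((v ᵥ* B) i : ℂ) * f x + pairing B v x * pd i f x := by
  rw [pd_fun_mul (by fun_prop (disch := simp)) hf, pd_pairing]

section Vigneras

variable (B : Matrix (Fin d) (Fin d) ℝ) (lam : ℝ)

theorem Vop_fun_add (hf : ContDiff ℝ ∞ f) (hg : ContDiff ℝ ∞ g) :
    Vop B lam (fun y => f y + g y) = fun x => Vop B lam f x + Vop B lam g x := by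
  ext x
  simp (disch := fun_prop (disch := simp)) only [Vop, pd_fun_add]
  simp only [mul_add, Finset.sum_add_distrib]
  ring

theorem Vop_const_mul (hf : ContDiff ℝ ∞ f) (c : ℂ) :
    Vop B lam (fun y => c * f y) = fun x => c * Vop B lam f x := by
  ext x
  simp (disch := fun_prop (disch := simp)) only [Vop, pd_const_mul]
  simp only [mul_add, mul_sub, Finset.mul_sum, mul_left_comm c]

theorem Vop_sum {ι : Type*} (s : Finset ι) {F : ι → (Fin d → ℝ) → ℂ}
    (hF : ∀ k ∈ s, ContDiff ℝ ∞ (F k)) :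
    Vop B lam (fun y => ∑ k ∈ s, F k y) = fun x => ∑ k ∈ s, Vop B lam (F k) x := by
  classical
  induction s using Finset.induction_on with
  | empty => ext x; simp [Vop, pd_const]
  | insert a s ha ih =>
    have hs : ∀ k ∈ s, ContDiff ℝ ∞ (F k) := fun k hk => hF k (by simp [hk])
    simp only [Finset.sum_insert ha]
    rw [Vop_fun_add B lam (hF a (by simp)) (ContDiff.sum hs), ih hs]

theorem pd_Vop (hf : ContDiff ℝ ∞ f) (k : Fin d) :
    pd k (Vop B lam f) = Vop B (lam - 1) (pd k f) := by
  have hf2 {g : (Fin d → ℝ) → ℂ} (hg : ContDiff ℝ ∞ g) : ContDiff ℝ 2 g :=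
    hg.of_le (by norm_cast)
  have h3 (i j : Fin d) : pd k (pd i (pd j f)) = pd i (pd j (pd k f)) := by
    rw [pd_comm (hf2 (hf.pd j)) k i, pd_comm (hf2 hf) k j]
  ext x
  unfold Vop
  simp (disch := fun_prop (disch := simp)) only [pd_fun_add, pd_fun_sub, pd_const_mul,
    pd_fun_sum, pd_fun_mul, pd_ofReal_apply, h3, pd_comm (hf2 hf) k]
  simp only [ite_mul, one_mul, zero_mul, Finset.sum_add_distrib, Finset.sum_ite_eq',
    Finset.mem_univ, if_true]
  push_cast
  ring

theorem Vop_pairing_mul (hB : B.IsSymm) (hdet : IsUnit B.det) (v : Fin d → ℝ)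
    (hf : ContDiff ℝ ∞ f) :
    Vop B (lam + 1) (fun y => pairing B v y * f y)
      = fun x => pairing B v x * Vop B lam f x + 2 * dirPd v f x := by
  have hc₁ (i : Fin d) : ∑ j, (B⁻¹ i j : ℂ) * ((v ᵥ* B) j : ℂ) = v i := by
    have : B⁻¹ *ᵥ (v ᵥ* B) = v := by
      rw [← Matrix.mulVec_transpose, hB.eq, Matrix.mulVec_mulVec, Matrix.nonsing_inv_mul B hdet,
        Matrix.one_mulVec]
    exact_mod_cast congrFun this i
  have hc₂ (j : Fin d) : ∑ i, (B⁻¹ i j : ℂ) * ((v ᵥ* B) i : ℂ) = v j := by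
    have : v ᵥ* B ᵥ* B⁻¹ = v := by
      rw [Matrix.vecMul_vecMul, Matrix.mul_nonsing_inv B hdet, Matrix.vecMul_one]
    simpa [Matrix.vecMul, dotProduct, mul_comm] using congrArg Complex.ofReal (congrFun this j)
  have hcx (x : Fin d → ℝ) : ∑ i, (x i : ℂ) * ((v ᵥ* B) i : ℂ) = pairing B v x := by
    simp [pairing_eq_sum, mul_comm]
  ext x
  unfold Vop
  simp (disch := fun_prop (disch := simp)) only [pd_pairing_mul, pd_fun_add, pd_const_mul]
  have hΔ : ∑ i, ∑ j, (B⁻¹ i j : ℂ) * (((v ᵥ* B) j : ℂ) * pd i f x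
        + (((v ᵥ* B) i : ℂ) * pd j f x + pairing B v x * pd i (pd j f) x))
      = 2 * dirPd v f x + pairing B v x * ∑ i, ∑ j, (B⁻¹ i j : ℂ) * pd i (pd j f) x := by
    have e₁ : ∑ i, ∑ j, (B⁻¹ i j : ℂ) * (((v ᵥ* B) j : ℂ) * pd i f x) = dirPd v f x := by
      simp only [← mul_assoc, ← Finset.sum_mul, hc₁]; rfl
    have e₂ : ∑ i, ∑ j, (B⁻¹ i j : ℂ) * (((v ᵥ* B) i : ℂ) * pd j f x) = dirPd v f x := by
      rw [Finset.sum_comm]; simp only [← mul_assoc, ← Finset.sum_mul, hc₂]; rfl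
    simp only [mul_add, Finset.sum_add_distrib, e₁, e₂, Finset.mul_sum,
      mul_left_comm (pairing B v x)]
    ring
  have hE : ∑ i, (x i : ℂ) * (((v ᵥ* B) i : ℂ) * f x + pairing B v x * pd i f x)
      = pairing B v x * f x + pairing B v x * ∑ i, (x i : ℂ) * pd i f x := by
    simp only [mul_add, Finset.sum_add_distrib, ← mul_assoc, ← Finset.sum_mul, hcx,
      mul_comm (pairing B v x)]
  rw [hΔ, hE]
  push_cast
  ring

theorem Vop_dirPd (v : Fin d → ℝ) (hf : ContDiff ℝ ∞ f) :
    Vop B (lam + 1) (dirPd v f)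
      = fun x => dirPd v (Vop B lam f) x - 4 * Real.pi * dirPd v f x := by
  have hshift (g : (Fin d → ℝ) → ℂ) (x : Fin d → ℝ) :
      Vop B (lam + 1) g x = Vop B (lam - 1) g x - 4 * Real.pi * g x := by
    simp only [Vop]; push_cast; ring
  ext x
  unfold dirPd
  rw [Vop_sum B _ _ (fun k _ => by fun_prop)]
  simp only [Vop_const_mul B _ (hf.pd _), hshift, pd_Vop B lam hf, Finset.mul_sum,
    Finset.sum_sub_distrib]

end Vigneras

theorem raising_intertwines_vigneras_general {d : ℕ}
    (B : Matrix (Fin d) (Fin d) ℝ) (hsymm : B.IsSymm) (hinv : IsUnit B.det)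
    (v : Fin d → ℝ) (lam : ℝ) (f : (Fin d → ℝ) → ℂ) (hf : ContDiff ℝ (⊤ : ℕ∞) f) :
    (∀ x : Fin d → ℝ, Vop B (lam + 1) (Dop B v f) x = Dop B v (Vop B lam f) x) ∧
    ((∀ x : Fin d → ℝ, Vop B lam f x = 0) →
      ∀ x : Fin d → ℝ, Vop B (lam + 1) (Dop B v f) x = 0) := by
  have key : Vop B (lam + 1) (Dop B v f) = Dop B v (Vop B lam f) := by
    ext x
    simp only [Dop_eq]
    rw [Vop_fun_add B _ (by fun_prop) (by fun_prop), Vop_const_mul B _ (hf.dirPd v),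
      Vop_pairing_mul B lam hsymm hinv v hf, Vop_dirPd B lam v hf]
    have hπ : (Real.pi : ℂ) ≠ 0 := Complex.ofReal_ne_zero.mpr Real.pi_ne_zero
    field_simp
    ring
  refine ⟨fun x => congrFun key x, fun h0 x => ?_⟩
  rw [key, funext h0]
  simp [Dop, pd_const]

/-- the Vignéras operator intertwines with the raising operator:
`V_{λ+1}(𝒟(v) f) = 𝒟(v)(V_λ f)`; in particular `𝒟(v)` maps solutions with parameter
`λ` to solutions with parameter `λ+1`. -/
theorem raising_intertwines_vigneras {d : ℕ} (hd : 1 ≤ d)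
    (B : Matrix (Fin d) (Fin d) ℝ) (hsymm : B.IsSymm) (hinv : IsUnit B.det)
    (v : Fin d → ℝ) (lam : ℝ) (f : (Fin d → ℝ) → ℂ) (hf : ContDiff ℝ (⊤ : ℕ∞) f) :
    (∀ x : Fin d → ℝ, Vop B (lam + 1) (Dop B v f) x = Dop B v (Vop B lam f) x) ∧
    ((∀ x : Fin d → ℝ, Vop B lam f x = 0) →
      ∀ x : Fin d → ℝ, Vop B (lam + 1) (Dop B v f) x = 0) :=
  raising_intertwines_vigneras_general B hsymm hinv v lam f hf
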